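/- arXiv:1511.02383 — 3 statements merged into one kernel-verified Lean document; each statement's English description precedes it below -/
import Mathlib

section
/- For every natural number n, every polynomial f ∈ ℂ[X] of degree at most n, and every z ∈ ℂ, one has (n+1)·∫_ℂ f(w)·(1 + z·conj(w))^n dμ_n(w) = f(z). That is, (n+1)(1+z·conj(w))^n is the reproducing (Bergman) kernel for polynomials of degree at most n with respect to μ_n. -/
/-!
The measure `μ_n` is rotation invariant, and rotating by `u` multiplies `∫ w^a w̄^b dμ_n` by
`u^a ū^b = u^(a-b)`, so distinct monomials are orthogonal. The radial integrals
`∫ |w|^(2k) dμ_n = 2 ∫_0^∞ r^(2k+1) (1+r²)^-(n+2) dr` satisfy a Beta-type recurrence obtained by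
differentiating `r^(2k+2) / (1+r²)^(n+1)`, which gives `‖w^k‖² = 1 / ((n+1) C(n,k))`.
Expanding `(1 + z w̄)^n` binomially, the coefficient `C(n,k) z^k` of `w̄^k` meets the factor
`f_k / ((n+1) C(n,k))`, so `(n+1) ∫ f(w) (1 + z w̄)^n dμ_n = ∑ f_k z^k = f(z)`.
-/

open MeasureTheory

noncomputable def mu (n : ℕ) : Measure ℂ :=
  volume.withDensity fun z => ENNReal.ofReal ((1 / Real.pi) * ((1 + ‖z‖ ^ 2) ^ (n + 2))⁻¹)

open Set Filter Topology ComplexConjugate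

section RadialIntegrals

lemma abs_pow_le_one_add_sq_pow (r : ℝ) {p m : ℕ} (hp : p ≤ 2 * m) :
    |r| ^ p ≤ (1 + r ^ 2) ^ m := by
  rcases le_total |r| 1 with h | h
  · calc |r| ^ p ≤ 1 := pow_le_one₀ (abs_nonneg r) h
      _ ≤ (1 + r ^ 2) ^ m := one_le_pow₀ (by nlinarith)
  · calc |r| ^ p ≤ |r| ^ (2 * m) := pow_le_pow_right₀ h hp
      _ = (r ^ 2) ^ m := by rw [pow_mul, sq_abs]
      _ ≤ (1 + r ^ 2) ^ m := pow_le_pow_left₀ (sq_nonneg r) (by linarith) m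

lemma abs_pow_div_one_add_sq_pow_le (r : ℝ) {p m : ℕ} (hp : p ≤ 2 * m) :
    |r| ^ p / (1 + r ^ 2) ^ (m + 1) ≤ (1 + r ^ 2)⁻¹ := by
  have h : 0 < 1 + r ^ 2 := by positivity
  rw [pow_succ, div_mul_eq_div_div, div_le_iff₀ h, inv_mul_cancel₀ h.ne']
  exact div_le_one_of_le₀ (abs_pow_le_one_add_sq_pow r hp) (by positivity)

lemma integrable_pow_div_one_add_sq_pow {p m : ℕ} (hp : p ≤ 2 * m) :
    Integrable fun r : ℝ => r ^ p / (1 + r ^ 2) ^ (m + 1) := by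
  refine integrable_inv_one_add_sq.mono' (Measurable.aestronglyMeasurable (by fun_prop))
    (.of_forall fun r => ?_)
  rw [norm_div, norm_pow, Real.norm_eq_abs, Real.norm_of_nonneg (by positivity)]
  exact abs_pow_div_one_add_sq_pow_le r hp

lemma tendsto_pow_div_one_add_sq_pow {k m : ℕ} (hk : k ≤ m) :
    Tendsto (fun r : ℝ => r ^ (2 * k) / (1 + r ^ 2) ^ (m + 1)) atTop (𝓝 0) := by
  have h_inv : Tendsto (fun r : ℝ => (1 + r ^ 2)⁻¹) atTop (𝓝 0) :=
    tendsto_inv_atTop_zero.comp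
      (tendsto_atTop_add_const_left _ 1 (tendsto_pow_atTop two_ne_zero))
  refine squeeze_zero (fun r => div_nonneg ((even_two_mul k).pow_nonneg r) (by positivity))
    (fun r => ?_) h_inv
  rw [← (even_two_mul k).pow_abs]
  exact abs_pow_div_one_add_sq_pow_le r (by omega)

lemma hasDerivAt_pow_div_one_add_sq_pow (j m : ℕ) (r : ℝ) :
    HasDerivAt (fun r : ℝ => r ^ j / (1 + r ^ 2) ^ (m + 1))
      (j * r ^ (j - 1) / (1 + r ^ 2) ^ (m + 1) -
        2 * (m + 1) * (r ^ (j + 1) / (1 + r ^ 2) ^ (m + 2))) r := by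
  have h : 0 < 1 + r ^ 2 := by positivity
  have h_denom : HasDerivAt (fun r : ℝ => (1 + r ^ 2) ^ (m + 1))
      ((m + 1) * (1 + r ^ 2) ^ m * (2 * r)) r := by
    simpa using ((hasDerivAt_pow 2 r).const_add 1).fun_pow (m + 1)
  refine ((hasDerivAt_pow j r).fun_div h_denom (pow_ne_zero _ h.ne')).congr_deriv ?_
  field_simp
  ring

lemma integral_Ioi_div_one_add_sq_pow (n : ℕ) :
    ∫ r in Ioi (0 : ℝ), r / (1 + r ^ 2) ^ (n + 2) = 1 / (2 * ((n : ℝ) + 1)) := by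
  have h_deriv (r : ℝ) : HasDerivAt (fun r : ℝ => 1 / (1 + r ^ 2) ^ (n + 1))
      (-(2 * (n + 1)) * (r / (1 + r ^ 2) ^ (n + 2))) r := by
    simpa using hasDerivAt_pow_div_one_add_sq_pow 0 n r
  have h_int : IntegrableOn (fun r : ℝ => r / (1 + r ^ 2) ^ (n + 2)) (Ioi 0) := by
    simpa using (integrable_pow_div_one_add_sq_pow (p := 1) (m := n + 1) (by omega)).integrableOn
  have h := integral_Ioi_of_hasDerivAt_of_tendsto' (fun r _ => h_deriv r) (h_int.const_mul _)
    (by simpa using tendsto_pow_div_one_add_sq_pow (k := 0) (m := n) (Nat.zero_le _))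
  rw [integral_const_mul] at h
  norm_num at h
  field_simp
  linarith

lemma integral_Ioi_pow_div_one_add_sq_pow_recurrence {n k : ℕ} (hk : k + 1 ≤ n) :
    ((k : ℝ) + 1) * ∫ r in Ioi (0 : ℝ), r ^ (2 * k + 1) / (1 + r ^ 2) ^ (n + 2) =
      ((n : ℝ) - k) * ∫ r in Ioi (0 : ℝ), r ^ (2 * (k + 1) + 1) / (1 + r ^ 2) ^ (n + 2) := by
  have h_int {j : ℕ} (hj : j ≤ n) :
      IntegrableOn (fun r : ℝ => r ^ (2 * j + 1) / (1 + r ^ 2) ^ (n + 2)) (Ioi 0) :=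
    (integrable_pow_div_one_add_sq_pow (m := n + 1) (by omega)).integrableOn
  -- `1 / (1+r²)^(n+1) = (1 + r²) / (1+r²)^(n+2)` turns the derivative into a combination of
  -- two integrands with the same denominator
  have h_deriv (r : ℝ) : HasDerivAt (fun r : ℝ => r ^ (2 * (k + 1)) / (1 + r ^ 2) ^ (n + 1))
      (2 * (k + 1) * (r ^ (2 * k + 1) / (1 + r ^ 2) ^ (n + 2)) -
        2 * (n - k) * (r ^ (2 * (k + 1) + 1) / (1 + r ^ 2) ^ (n + 2))) r := by
    refine (hasDerivAt_pow_div_one_add_sq_pow (2 * (k + 1)) n r).congr_deriv ?_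
    rw [show 2 * (k + 1) - 1 = 2 * k + 1 by omega]
    field_simp
    push_cast
    ring
  have h := integral_Ioi_of_hasDerivAt_of_tendsto' (fun r _ => h_deriv r)
    (((h_int (by omega)).const_mul _).sub ((h_int hk).const_mul _))
    (tendsto_pow_div_one_add_sq_pow hk)
  rw [integral_sub ((h_int (by omega)).const_mul _) ((h_int hk).const_mul _), integral_const_mul,
    integral_const_mul, zero_pow (by omega), zero_div, sub_self] at h
  linarith

lemma integral_Ioi_pow_div_one_add_sq_pow {n k : ℕ} (hk : k ≤ n) :
    ∫ r in Ioi (0 : ℝ), r ^ (2 * k + 1) / (1 + r ^ 2) ^ (n + 2) =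
      1 / (2 * ((n : ℝ) + 1) * n.choose k) := by
  induction k with
  | zero => simpa using integral_Ioi_div_one_add_sq_pow n
  | succ k ih =>
    have h_rec := integral_Ioi_pow_div_one_add_sq_pow_recurrence hk
    rw [ih (by omega)] at h_rec
    have h_choose : (n.choose (k + 1) : ℝ) * (k + 1) = n.choose k * ((n : ℝ) - k) := by
      rw [← Nat.cast_sub (by omega), ← Nat.cast_add_one, ← Nat.cast_mul, ← Nat.cast_mul,
        Nat.choose_succ_right_eq]
    have h_pos : (n.choose k : ℝ) ≠ 0 := by exact_mod_cast (Nat.choose_pos (by omega)).ne'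
    have h_pos' : (n.choose (k + 1) : ℝ) ≠ 0 := by exact_mod_cast (Nat.choose_pos hk).ne'
    field_simp at h_rec ⊢
    set I := ∫ r in Ioi (0 : ℝ), r ^ (2 * (k + 1) + 1) / (1 + r ^ 2) ^ (n + 2)
    apply mul_right_cancel₀ (by positivity : (k : ℝ) + 1 ≠ 0)
    linear_combination (2 * ((n : ℝ) + 1) * I) * h_choose - h_rec

end RadialIntegrals

noncomputable def fubiniStudyDensity (n : ℕ) (r : ℝ) : ℝ :=
  (1 / Real.pi) * ((1 + r ^ 2) ^ (n + 2))⁻¹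

lemma mu_eq_withDensity (n : ℕ) :
    mu n = volume.withDensity fun z => ENNReal.ofReal (fubiniStudyDensity n ‖z‖) :=
  rfl

lemma fubiniStudyDensity_nonneg (n : ℕ) (r : ℝ) : 0 ≤ fubiniStudyDensity n r := by
  have := Real.pi_pos
  unfold fubiniStudyDensity
  positivity

@[fun_prop]
lemma measurable_fubiniStudyDensity (n : ℕ) : Measurable (fubiniStudyDensity n) := by
  unfold fubiniStudyDensity
  fun_prop

section FubiniStudyMeasure

variable {E : Type*} [NormedAddCommGroup E] [NormedSpace ℝ E] (n : ℕ)

lemma integral_mu (g : ℂ → E) :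
    ∫ w, g w ∂mu n = ∫ w, fubiniStudyDensity n ‖w‖ • g w := by
  rw [mu_eq_withDensity, integral_withDensity_eq_integral_toReal_smul (by fun_prop)
    (.of_forall fun _ => ENNReal.ofReal_lt_top)]
  simp_rw [ENNReal.toReal_ofReal (fubiniStudyDensity_nonneg _ _)]

lemma integrable_mu_iff (g : ℂ → E) :
    Integrable g (mu n) ↔ Integrable fun w => fubiniStudyDensity n ‖w‖ • g w := by
  rw [mu_eq_withDensity, integrable_withDensity_iff_integrable_smul' (by fun_prop)
    (.of_forall fun _ => ENNReal.ofReal_lt_top)]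
  simp_rw [ENNReal.toReal_ofReal (fubiniStudyDensity_nonneg _ _)]

lemma integral_mu_comp_mul_left (u : Circle) (g : ℂ → E) :
    ∫ w, g (u * w) ∂mu n = ∫ w, g w ∂mu n := by
  have h := (rotation u).measurePreserving.integral_comp
    (rotation u).toHomeomorph.measurableEmbedding fun v => fubiniStudyDensity n ‖v‖ • g v
  simp only [rotation_apply, norm_mul, Circle.norm_coe, one_mul] at h
  rw [integral_mu, integral_mu, ← h]

lemma integral_mu_norm_comp (h : ℝ → E) :
    ∫ w, h ‖w‖ ∂mu n = (2 * Real.pi) • ∫ r in Ioi 0, (r * fubiniStudyDensity n r) • h r := by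
  have h_ball : volume.real (Metric.ball (0 : ℂ) 1) = Real.pi := by simp [measureReal_def]
  rw [integral_mu, integral_fun_norm_addHaar volume (f := fun r => fubiniStudyDensity n r • h r)]
  simp only [Complex.finrank_real_complex, h_ball, smul_smul]
  rw [← Nat.cast_smul_eq_nsmul ℝ, smul_smul]
  norm_num

lemma integrable_mu_norm_comp_iff (h : ℝ → E) :
    Integrable (fun w => h ‖w‖) (mu n) ↔
      IntegrableOn (fun r => (r * fubiniStudyDensity n r) • h r) (Ioi 0) := by
  rw [integrable_mu_iff, integrable_fun_norm_addHaar volume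
    (f := fun r => fubiniStudyDensity n r • h r)]
  simp [Complex.finrank_real_complex, smul_smul]

end FubiniStudyMeasure

section Moments

lemma integrable_mu_norm_pow {n p : ℕ} (hp : p ≤ 2 * n + 1) :
    Integrable (fun w : ℂ => ‖w‖ ^ p) (mu n) := by
  have h_eq : (fun r : ℝ => (r * fubiniStudyDensity n r) • r ^ p) =
      fun r => 1 / Real.pi * (r ^ (p + 1) / (1 + r ^ 2) ^ (n + 2)) := by
    ext r
    simp only [fubiniStudyDensity, smul_eq_mul]
    ring
  rw [integrable_mu_norm_comp_iff n (fun r => r ^ p), h_eq]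
  exact ((integrable_pow_div_one_add_sq_pow (m := n + 1) (by omega)).integrableOn).const_mul _

lemma integral_mu_norm_pow_two_mul {n k : ℕ} (hk : k ≤ n) :
    ∫ w : ℂ, ‖w‖ ^ (2 * k) ∂mu n = 1 / ((n + 1) * n.choose k) := by
  have h_eq : (fun r : ℝ => (r * fubiniStudyDensity n r) • r ^ (2 * k)) =
      fun r => 1 / Real.pi * (r ^ (2 * k + 1) / (1 + r ^ 2) ^ (n + 2)) := by
    ext r
    simp only [fubiniStudyDensity, smul_eq_mul]
    ring
  rw [integral_mu_norm_comp n (fun r => r ^ (2 * k)), h_eq, integral_const_mul,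
    integral_Ioi_pow_div_one_add_sq_pow hk, smul_eq_mul]
  field_simp

lemma integrable_mu_pow_mul_conj_pow {n a b : ℕ} (hab : a + b ≤ 2 * n + 1) :
    Integrable (fun w : ℂ => w ^ a * conj w ^ b) (mu n) :=
  (integrable_mu_norm_pow hab).mono' (by fun_prop) (.of_forall fun w => by simp [pow_add])

lemma coe_exp_pow_mul_conj_pow_eq_neg_one {a b : ℕ} (hab : a ≠ b) :
    (Circle.exp (Real.pi / ((a : ℝ) - b)) : ℂ) ^ a *
      conj (Circle.exp (Real.pi / ((a : ℝ) - b)) : ℂ) ^ b = -1 := by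
  have h_ne : (a : ℂ) - b ≠ 0 := sub_ne_zero.2 (by exact_mod_cast hab)
  simp only [Circle.coe_exp, ← Complex.exp_conj, map_mul, Complex.conj_ofReal, Complex.conj_I,
    ← Complex.exp_nat_mul, ← Complex.exp_add]
  convert Complex.exp_pi_mul_I using 2
  push_cast
  field_simp
  ring

lemma integral_mu_pow_mul_conj_pow_of_ne {n a b : ℕ} (hab : a ≠ b) :
    ∫ w : ℂ, w ^ a * conj w ^ b ∂mu n = 0 := by
  have h_rot (u w : ℂ) :
      (u * w) ^ a * conj (u * w) ^ b = (u ^ a * conj u ^ b) * (w ^ a * conj w ^ b) := by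
    rw [map_mul]
    ring
  have h := integral_mu_comp_mul_left n (Circle.exp (Real.pi / ((a : ℝ) - b)))
    fun w => w ^ a * conj w ^ b
  simp only [h_rot, integral_const_mul, coe_exp_pow_mul_conj_pow_eq_neg_one hab] at h
  linear_combination -h / 2

lemma integral_mu_pow_mul_conj_pow_self {n k : ℕ} (hk : k ≤ n) :
    ∫ w : ℂ, w ^ k * conj w ^ k ∂mu n = 1 / ((n + 1) * n.choose k) := by
  have h (w : ℂ) : w ^ k * conj w ^ k = ((‖w‖ ^ (2 * k) : ℝ) : ℂ) := by
    rw [← mul_pow, Complex.mul_conj', pow_mul]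
    norm_cast
  simp_rw [h]
  rw [integral_complex_ofReal, integral_mu_norm_pow_two_mul hk]
  simp

end Moments

section Polynomial

open Polynomial

variable {n j : ℕ} {f : ℂ[X]}

lemma eval_mul_conj_pow_eq_sum (hf : f.natDegree ≤ n) (w : ℂ) :
    f.eval w * conj w ^ j = ∑ k ∈ Finset.range (n + 1), f.coeff k * (w ^ k * conj w ^ j) := by
  rw [eval_eq_sum_range' (Nat.lt_succ_of_le hf), Finset.sum_mul]
  simp_rw [mul_assoc]

lemma integrable_mu_eval_mul_conj_pow (hf : f.natDegree ≤ n) (hj : j ≤ n + 1) :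
    Integrable (fun w => f.eval w * conj w ^ j) (mu n) := by
  simp_rw [eval_mul_conj_pow_eq_sum hf]
  exact integrable_finsetSum _ fun k hk =>
    (integrable_mu_pow_mul_conj_pow (by have := Finset.mem_range.1 hk; omega)).const_mul _

lemma integral_mu_eval_mul_conj_pow (hf : f.natDegree ≤ n) (hj : j ≤ n) :
    ∫ w, f.eval w * conj w ^ j ∂mu n = f.coeff j / ((n + 1) * n.choose j) := by
  simp_rw [eval_mul_conj_pow_eq_sum hf]
  rw [integral_finsetSum _ fun k hk =>
    (integrable_mu_pow_mul_conj_pow (by have := Finset.mem_range.1 hk; omega)).const_mul _]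
  simp_rw [integral_const_mul]
  rw [Finset.sum_eq_single_of_mem j (Finset.mem_range.2 (by omega))
    fun k _ hkj => by rw [integral_mu_pow_mul_conj_pow_of_ne hkj, mul_zero],
    integral_mu_pow_mul_conj_pow_self hj, mul_one_div]

end Polynomial

/-- `(n+1)(1+z·conj w)^n` is the reproducing (Bergman) kernel for polynomials of degree
at most `n` with respect to `μ_n`. -/
theorem bergman_reproducing (n : ℕ) (f : Polynomial ℂ) (hf : f.natDegree ≤ n) (z : ℂ) :
    ((n : ℂ) + 1) * ∫ w : ℂ, f.eval w * (1 + z * (starRingEnd ℂ) w) ^ n ∂(mu n) =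
      f.eval z := by
  have h_kernel (w : ℂ) : f.eval w * (1 + z * conj w) ^ n =
      ∑ j ∈ Finset.range (n + 1), (z ^ j * n.choose j) * (f.eval w * conj w ^ j) := by
    rw [add_comm, add_pow, Finset.mul_sum]
    exact Finset.sum_congr rfl fun j _ => by ring
  have h_le {j} (hj : j ∈ Finset.range (n + 1)) : j ≤ n := Nat.lt_succ_iff.1 (Finset.mem_range.1 hj)
  simp_rw [h_kernel]
  rw [integral_finsetSum _ fun j hj =>
      (integrable_mu_eval_mul_conj_pow hf (by have := h_le hj; omega)).const_mul _,
    Finset.mul_sum, Polynomial.eval_eq_sum_range' (Nat.lt_succ_of_le hf)]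
  refine Finset.sum_congr rfl fun j hj => ?_
  have h_choose : (n.choose j : ℂ) ≠ 0 := by exact_mod_cast (Nat.choose_pos (h_le hj)).ne'
  rw [integral_const_mul, integral_mu_eval_mul_conj_pow hf (h_le hj)]
  field_simp
end

section
/- Let λ₁, λ₂ be real numbers with λ₁ ≥ 0, λ₂ ≤ 0 and (λ₁, λ₂) ≠ (0,0). Then ∫_{ℂ²} |λ₁·|y|² + λ₂·|ξ|²| · e^{−|y|²−|ξ|²} dA(y) dA(ξ) = π²·(λ₁² + λ₂²)/(λ₁ − λ₂), where dA denotes Lebesgue measure on ℂ ≅ ℝ². -/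
/-!
In polar coordinates on each factor `ℂ` (`∫_ℂ g(|z|²) dA = π ∫₀^∞ g`) the integral becomes
`π² ∫∫_{s,t>0} |λ₁ s + λ₂ t| e^{-s-t}`. For the inner integral write `|x| = x + 2 max(-x, 0)`:
the negative part of `λ₁ s + λ₂ t` is supported on a half-line `t > -λ₁ s / λ₂`, and by the
memorylessness of the exponential density its contribution is `-λ₂ e^{λ₁ s / λ₂}`. What remains
are Gamma and exponential integrals in `s`.
-/

open MeasureTheory Real Set

namespace Complex

variable {E : Type*} [NormedAddCommGroup E] [NormedSpace ℝ E]

theorem integrable_comp_norm_sq_iff {g : ℝ → E} :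
    Integrable (fun z : ℂ => g (‖z‖ ^ 2)) ↔ IntegrableOn g (Ioi 0) := by
  rw [integrable_fun_norm_addHaar volume (f := fun y => g (y ^ 2)),
    ← integrableOn_Ioi_comp_rpow_iff' g two_ne_zero, finrank_real_complex]
  refine integrableOn_congr_fun (fun y _ => ?_) measurableSet_Ioi
  norm_num

theorem integral_comp_norm_sq (g : ℝ → E) :
    ∫ z : ℂ, g (‖z‖ ^ 2) = π • ∫ t in Ioi 0, g t := by
  rw [integral_fun_norm_addHaar volume (fun y => g (y ^ 2)), finrank_real_complex,
    ← integral_comp_rpow_Ioi_of_pos (g := g) two_pos, measureReal_def, volume_ball,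
    ← Nat.cast_smul_eq_nsmul ℝ]
  simp only [← integral_smul]
  refine setIntegral_congr_fun measurableSet_Ioi fun y _ => ?_
  norm_num [smul_smul]
  ring_nf

theorem integral_prod_comp_norm_sq (F : ℝ → ℝ → E)
    (hF : Integrable fun p : ℂ × ℂ => F (‖p.1‖ ^ 2) (‖p.2‖ ^ 2)) :
    ∫ p : ℂ × ℂ, F (‖p.1‖ ^ 2) (‖p.2‖ ^ 2) = π ^ 2 • ∫ s in Ioi 0, ∫ t in Ioi 0, F s t := by
  rw [Measure.volume_eq_prod] at hF ⊢
  rw [integral_prod _ hF]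
  simp_rw [integral_comp_norm_sq (F (‖_‖ ^ 2))]
  rw [integral_smul, integral_comp_norm_sq fun s => ∫ t in Ioi 0, F s t, smul_smul, sq]

theorem integrable_prod_comp_norm_sq_mul {f g : ℝ → ℝ} (hf : IntegrableOn f (Ioi 0))
    (hg : IntegrableOn g (Ioi 0)) :
    Integrable fun p : ℂ × ℂ => f (‖p.1‖ ^ 2) * g (‖p.2‖ ^ 2) := by
  rw [Measure.volume_eq_prod]
  exact (integrable_comp_norm_sq_iff.2 hf).mul_prod (integrable_comp_norm_sq_iff.2 hg)

end Complex

theorem integrableOn_mul_exp_neg_Ioi : IntegrableOn (fun t : ℝ => t * exp (-t)) (Ioi 0) := by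
  refine (GammaIntegral_convergent two_pos).congr_fun (fun t _ => ?_) measurableSet_Ioi
  norm_num [mul_comm]

theorem integral_mul_exp_neg_Ioi : ∫ t in Ioi (0 : ℝ), t * exp (-t) = 1 := by
  rw [← Gamma_two, Gamma_eq_integral two_pos]
  refine setIntegral_congr_fun measurableSet_Ioi (fun t _ => ?_)
  norm_num [mul_comm]

theorem integrableOn_max_add_zero_mul_exp_neg_Ioi {a : ℝ} (ha : a ≤ 0) :
    IntegrableOn (fun t : ℝ => max (t + a) 0 * exp (-t)) (Ioi 0) := by
  refine integrableOn_mul_exp_neg_Ioi.mono' (by fun_prop) ?_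
  filter_upwards [ae_restrict_mem measurableSet_Ioi] with t (ht : 0 < t)
  rw [norm_of_nonneg (by positivity)]
  gcongr
  exact max_le (by linarith) ht.le

theorem integral_max_add_zero_mul_exp_neg_Ioi {a : ℝ} (ha : a ≤ 0) :
    ∫ t in Ioi 0, max (t + a) 0 * exp (-t) = exp a := by
  calc ∫ t in Ioi 0, max (t + a) 0 * exp (-t)
      = ∫ t in Ioi (-a), (t + a) * exp (-t) := by
        rw [setIntegral_eq_of_subset_of_forall_sdiff_eq_zero measurableSet_Ioi
          (Ioi_subset_Ioi (neg_nonneg.2 ha)) fun t ht => ?_]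
        · refine setIntegral_congr_fun measurableSet_Ioi fun t (ht : -a < t) => ?_
          rw [max_eq_left (by linarith)]
        · have : t ≤ -a := not_lt.1 ht.2
          rw [max_eq_right (by linarith), zero_mul]
    _ = ∫ u in Ioi 0, u * exp (-u) * exp a := by
        rw [← (measurePreserving_sub_right volume a).setIntegral_preimage_emb
          (measurableEmbedding_subRight a), preimage_sub_const_Ioi, neg_add_cancel]
        refine setIntegral_congr_fun measurableSet_Ioi fun u _ => ?_
        rw [mul_assoc, ← exp_add]
        ring_nf
    _ = exp a := by rw [integral_mul_const, integral_mul_exp_neg_Ioi, one_mul]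

theorem abs_add_mul_eq {b c : ℝ} (hc : 0 ≤ c) (hb : b ≤ 0) (t : ℝ) :
    |c + b * t| = c + b * t - 2 * b * max (t + c / b) 0 := by
  rcases hb.eq_or_lt with rfl | hb
  · simp [abs_of_nonneg hc]
  rw [show c + b * t = b * (t + c / b) by rw [mul_add, mul_div_cancel₀ _ hb.ne]; ring, abs_mul,
    abs_of_neg hb]
  rcases le_total 0 (t + c / b) with h | h
  · rw [abs_of_nonneg h, max_eq_left h]; ring
  · rw [abs_of_nonpos h, max_eq_right h]; ring

theorem integral_abs_add_mul_mul_exp_neg_Ioi {b c : ℝ} (hc : 0 ≤ c) (hb : b ≤ 0) :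
    ∫ t in Ioi 0, |c + b * t| * exp (-t) = c + b - 2 * b * exp (c / b) := by
  have hcb : c / b ≤ 0 := div_nonpos_of_nonneg_of_nonpos hc hb
  have hexp := integrableOn_exp_neg_Ioi 0
  have hmul := integrableOn_mul_exp_neg_Ioi
  have hmax := integrableOn_max_add_zero_mul_exp_neg_Ioi hcb
  have hlin : IntegrableOn (fun t => c * exp (-t) + b * (t * exp (-t))) (Ioi 0) :=
    (hexp.const_mul c).add (hmul.const_mul b)
  simp_rw [abs_add_mul_eq hc hb, sub_mul, add_mul, mul_assoc]
  rw [integral_sub hlin ((hmax.const_mul b).const_mul 2),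
    integral_add (hexp.const_mul c) (hmul.const_mul b), integral_const_mul, integral_const_mul,
    integral_const_mul, integral_const_mul, integral_exp_neg_Ioi_zero, integral_mul_exp_neg_Ioi,
    integral_max_add_zero_mul_exp_neg_Ioi hcb]
  ring

theorem integral_integral_abs_mul_add_mul_mul_exp_neg {a b : ℝ} (ha : 0 ≤ a) (hb : b ≤ 0) :
    ∫ s in Ioi 0, ∫ t in Ioi 0, |a * s + b * t| * exp (-s - t) = (a ^ 2 + b ^ 2) / (a - b) := by
  have hk : a / b - 1 < 0 := by linarith [div_nonpos_of_nonneg_of_nonpos ha hb]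
  have inner : ∀ s ∈ Ioi (0 : ℝ), ∫ t in Ioi 0, |a * s + b * t| * exp (-s - t)
      = a * (s * exp (-s)) + b * exp (-s) - 2 * b * exp ((a / b - 1) * s) := by
    intro s (hs : 0 < s)
    simp_rw [sub_eq_add_neg (-s), exp_add, mul_left_comm _ (exp (-s))]
    rw [integral_const_mul, integral_abs_add_mul_mul_exp_neg_Ioi (by positivity) hb,
      show (a / b - 1) * s = a * s / b + -s by ring, exp_add]
    ring
  have hexp := integrableOn_exp_neg_Ioi 0
  have hmul := integrableOn_mul_exp_neg_Ioi
  have hlin : IntegrableOn (fun s => a * (s * exp (-s)) + b * exp (-s)) (Ioi 0) :=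
    (hmul.const_mul a).add (hexp.const_mul b)
  rw [setIntegral_congr_fun measurableSet_Ioi inner,
    integral_sub hlin ((integrableOn_exp_mul_Ioi hk 0).const_mul (2 * b)),
    integral_add (hmul.const_mul a) (hexp.const_mul b), integral_const_mul, integral_const_mul,
    integral_const_mul, integral_mul_exp_neg_Ioi, integral_exp_neg_Ioi_zero,
    integral_exp_mul_Ioi hk, mul_zero, exp_zero]
  rcases hb.eq_or_lt with rfl | hb
  · rcases eq_or_ne a 0 with rfl | ha0 <;> field_simp <;> ring
  · have hab : a - b ≠ 0 := by linarith
    field_simp [hk.ne, hb.ne]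
    ring

theorem integrable_abs_mul_add_mul_mul_exp_neg_norm_sq (a b : ℝ) :
    Integrable fun p : ℂ × ℂ =>
      |a * ‖p.1‖ ^ 2 + b * ‖p.2‖ ^ 2| * exp (-‖p.1‖ ^ 2 - ‖p.2‖ ^ 2) := by
  have hexp := integrableOn_exp_neg_Ioi 0
  have hmul := integrableOn_mul_exp_neg_Ioi
  refine (((Complex.integrable_prod_comp_norm_sq_mul hmul hexp).const_mul |a|).add
    ((Complex.integrable_prod_comp_norm_sq_mul hexp hmul).const_mul |b|)).mono'
    (by fun_prop) (.of_forall fun p => ?_)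
  set s := ‖p.1‖ ^ 2
  set t := ‖p.2‖ ^ 2
  have hs : 0 ≤ s := by positivity
  have ht : 0 ≤ t := by positivity
  calc ‖|a * s + b * t| * exp (-s - t)‖
      = |a * s + b * t| * (exp (-s) * exp (-t)) := by
        rw [norm_of_nonneg (by positivity), sub_eq_add_neg, exp_add]
    _ ≤ (|a| * s + |b| * t) * (exp (-s) * exp (-t)) := by
        gcongr
        calc |a * s + b * t| ≤ |a * s| + |b * t| := abs_add_le _ _
          _ = |a| * s + |b| * t := by rw [abs_mul, abs_mul, abs_of_nonneg hs, abs_of_nonneg ht]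
    _ = |a| * (s * exp (-s) * exp (-t)) + |b| * (exp (-s) * (t * exp (-t))) := by ring

theorem kac_rice_gaussian_integral_C2_general (l1 l2 : ℝ) (h1 : 0 ≤ l1) (h2 : l2 ≤ 0) :
    ∫ p : ℂ × ℂ, |l1 * ‖p.1‖ ^ 2 + l2 * ‖p.2‖ ^ 2| * Real.exp (-‖p.1‖ ^ 2 - ‖p.2‖ ^ 2) =
      Real.pi ^ 2 * (l1 ^ 2 + l2 ^ 2) / (l1 - l2) := by
  rw [Complex.integral_prod_comp_norm_sq (fun s t => |l1 * s + l2 * t| * exp (-s - t))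
      (integrable_abs_mul_add_mul_mul_exp_neg_norm_sq l1 l2),
    integral_integral_abs_mul_add_mul_mul_exp_neg h1 h2, smul_eq_mul, mul_div_assoc]

/-- `∫_{ℂ²} |λ₁|y|² + λ₂|ξ|²| · e^{−|y|²−|ξ|²} dA(y) dA(ξ) = π²(λ₁²+λ₂²)/(λ₁−λ₂)` for
`λ₁ ≥ 0 ≥ λ₂`, `(λ₁, λ₂) ≠ (0,0)`. -/
theorem kac_rice_gaussian_integral_C2 (l1 l2 : ℝ) (h1 : 0 ≤ l1) (h2 : l2 ≤ 0)
    (hne : (l1, l2) ≠ (0, 0)) :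
    ∫ p : ℂ × ℂ, |l1 * ‖p.1‖ ^ 2 + l2 * ‖p.2‖ ^ 2| * Real.exp (-‖p.1‖ ^ 2 - ‖p.2‖ ^ 2) =
      Real.pi ^ 2 * (l1 ^ 2 + l2 ^ 2) / (l1 - l2) :=
  kac_rice_gaussian_integral_C2_general l1 l2 h1 h2
end

section
/- For u ∈ ℂ set q = 1+|u|²/n, A_n = n·q^{n−1} + (n−1)|u|²·q^{n−2}, b₁ⁿ = 2n(n−1)(u/√n)q^{n−2} + n(n−1)(n−2)(u|u|²/n^{3/2})q^{n−3}, b₂ⁿ = √n·conj(u)·q^{n−1}, c₁₁ⁿ = 2n(n−1)q^{n−2} + 4n(n−1)(n−2)(|u|²/n)q^{n−3} + n(n−1)(n−2)(n−3)(|u|⁴/n²)q^{n−4}, and c₂₂ⁿ = q^n − 1. Then lim_{n→∞} n^{−2}·( c₁₁ⁿ − |b₁ⁿ|²/A_n ) = (2 + 2|u|² + |u|⁴)·e^{|u|²}/(1+|u|²), and lim_{n→∞} ( c₂₂ⁿ − |b₂ⁿ|²/A_n ) = (e^{|u|²} − 1 − |u|²)/(1+|u|²). -/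
/-! With `t = ‖u‖²` and `q = 1 + t/n`, every power `q ^ (n - k)` tends to `exp t`. After dividing
`c₁₁ⁿ` by `n²`, `‖b₁ⁿ‖²` by `n³`, and `‖b₂ⁿ‖²` and `A_n` by `n`, each quantity is a polynomial in
the factors `1 - j/n` and the powers `q ^ (n - k)`, so the four limits are `(2 + 4t + t²) eᵗ`,
`t (2 + t)² e²ᵗ`, `t e²ᵗ` and `(1 + t) eᵗ`; the two entries then converge to the stated values by
a rational identity in `t` and `eᵗ`. -/

open Filter

/-- `q = 1 + |u|²/n`. -/
noncomputable def qq (u : ℂ) (n : ℕ) : ℝ := 1 + ‖u‖ ^ 2 / n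

/-- `A_n = n·q^{n−1} + (n−1)|u|²·q^{n−2}`. -/
noncomputable def An (u : ℂ) (n : ℕ) : ℝ :=
  (n : ℝ) * qq u n ^ (n - 1) + ((n : ℝ) - 1) * ‖u‖ ^ 2 * qq u n ^ (n - 2)

/-- `b₁ⁿ = 2n(n−1)(u/√n)q^{n−2} + n(n−1)(n−2)(u|u|²/n^{3/2})q^{n−3}`. -/
noncomputable def b1 (u : ℂ) (n : ℕ) : ℂ :=
  2 * (n : ℂ) * ((n : ℂ) - 1) * (u / Complex.ofReal (Real.sqrt n)) *
      Complex.ofReal (qq u n) ^ (n - 2) +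
    (n : ℂ) * ((n : ℂ) - 1) * ((n : ℂ) - 2) *
      (u * Complex.ofReal (‖u‖ ^ 2) / Complex.ofReal ((n : ℝ) ^ ((3 : ℝ) / 2))) *
      Complex.ofReal (qq u n) ^ (n - 3)

/-- `b₂ⁿ = √n·conj(u)·q^{n−1}`. -/
noncomputable def b2 (u : ℂ) (n : ℕ) : ℂ :=
  Complex.ofReal (Real.sqrt n) * (starRingEnd ℂ) u * Complex.ofReal (qq u n) ^ (n - 1)

/-- `c₁₁ⁿ = 2n(n−1)q^{n−2} + 4n(n−1)(n−2)(|u|²/n)q^{n−3} + n(n−1)(n−2)(n−3)(|u|⁴/n²)q^{n−4}`. -/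
noncomputable def c11 (u : ℂ) (n : ℕ) : ℝ :=
  2 * (n : ℝ) * ((n : ℝ) - 1) * qq u n ^ (n - 2) +
    4 * (n : ℝ) * ((n : ℝ) - 1) * ((n : ℝ) - 2) * (‖u‖ ^ 2 / n) * qq u n ^ (n - 3) +
    (n : ℝ) * ((n : ℝ) - 1) * ((n : ℝ) - 2) * ((n : ℝ) - 3) * (‖u‖ ^ 4 / (n : ℝ) ^ 2) *
      qq u n ^ (n - 4)

/-- `c₂₂ⁿ = qⁿ − 1`. -/
noncomputable def c22 (u : ℂ) (n : ℕ) : ℝ := qq u n ^ n - 1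

open Topology

lemma tendsto_one_sub_div_nat (c : ℝ) : Tendsto (fun n : ℕ => 1 - c / n) atTop (𝓝 1) := by
  simpa using tendsto_const_nhds.sub (tendsto_const_div_atTop_nhds_zero_nat c)

lemma tendsto_one_add_div_pow_sub_exp (x : ℝ) (k : ℕ) :
    Tendsto (fun n : ℕ => (1 + x / n) ^ (n - k)) atTop (𝓝 (Real.exp x)) := by
  have hbase : Tendsto (fun n : ℕ => 1 + x / n) atTop (𝓝 1) := by
    simpa using tendsto_const_nhds.add (tendsto_const_div_atTop_nhds_zero_nat x)
  have hquot := (Real.tendsto_one_add_div_pow_exp x).div (by simpa using hbase.pow k) one_ne_zero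
  rw [div_one] at hquot
  refine hquot.congr' ?_
  filter_upwards [eventually_ge_atTop k, hbase.eventually_ne one_ne_zero] with n hk hne
  exact (pow_sub₀ _ hne hk).symm

section

variable (u : ℂ)

lemma tendsto_qq_pow_sub (k : ℕ) :
    Tendsto (fun n => qq u n ^ (n - k)) atTop (𝓝 (Real.exp (‖u‖ ^ 2))) :=
  tendsto_one_add_div_pow_sub_exp _ k

lemma An_div_self_eq {n : ℕ} (hn : n ≠ 0) :
    An u n / n = qq u n ^ (n - 1) + (1 - 1 / n) * ‖u‖ ^ 2 * qq u n ^ (n - 2) := by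
  rw [An]
  field_simp

lemma c11_div_sq_eq {n : ℕ} (hn : n ≠ 0) :
    c11 u n / n ^ 2 = 2 * (1 - 1 / n) * qq u n ^ (n - 2) +
      4 * (1 - 1 / n) * (1 - 2 / n) * ‖u‖ ^ 2 * qq u n ^ (n - 3) +
      (1 - 1 / n) * (1 - 2 / n) * (1 - 3 / n) * (‖u‖ ^ 2) ^ 2 * qq u n ^ (n - 4) := by
  rw [c11]
  field_simp

lemma b1_eq {n : ℕ} (hn : n ≠ 0) :
    b1 u n = ((n * √n * (2 * (1 - 1 / n) * qq u n ^ (n - 2) +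
      (1 - 1 / n) * (1 - 2 / n) * ‖u‖ ^ 2 * qq u n ^ (n - 3)) : ℝ) : ℂ) * u := by
  have hsqrt : (√n : ℂ) ≠ 0 := by exact_mod_cast (Real.sqrt_pos.mpr (by positivity)).ne'
  have hrpow : (n : ℝ) ^ ((3 : ℝ) / 2) = n * √n := by
    rw [Real.sqrt_eq_rpow, show (3 : ℝ) / 2 = 1 + 1 / 2 by norm_num,
      Real.rpow_add (by positivity), Real.rpow_one]
  have hsq : ((√n : ℝ) : ℂ) ^ 2 = n := by exact_mod_cast Real.sq_sqrt (Nat.cast_nonneg n)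
  rw [b1, hrpow]
  push_cast
  field_simp
  rw [hsq]
  ring

lemma norm_b1_sq_div_eq {n : ℕ} (hn : n ≠ 0) :
    ‖b1 u n‖ ^ 2 / n ^ 3 = ‖u‖ ^ 2 * (2 * (1 - 1 / n) * qq u n ^ (n - 2) +
      (1 - 1 / n) * (1 - 2 / n) * ‖u‖ ^ 2 * qq u n ^ (n - 3)) ^ 2 := by
  rw [b1_eq u hn, norm_mul, Complex.norm_real, Real.norm_eq_abs, mul_pow, sq_abs, mul_pow,
    mul_pow, Real.sq_sqrt (Nat.cast_nonneg n)]
  field_simp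

lemma norm_b2_sq (n : ℕ) : ‖b2 u n‖ ^ 2 = n * ‖u‖ ^ 2 * (qq u n ^ (n - 1)) ^ 2 := by
  rw [b2, norm_mul, norm_mul, Complex.norm_real, Complex.norm_conj, norm_pow, Complex.norm_real,
    Real.norm_eq_abs, Real.norm_eq_abs, abs_of_nonneg (Real.sqrt_nonneg _), mul_pow, mul_pow,
    Real.sq_sqrt (Nat.cast_nonneg n), abs_of_nonneg (by unfold qq; positivity)]

lemma tendsto_An_div_self :
    Tendsto (fun n : ℕ => An u n / n) atTop
      (𝓝 ((1 + ‖u‖ ^ 2) * Real.exp (‖u‖ ^ 2))) := by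
  refine Tendsto.congr' ((eventually_ne_atTop 0).mono fun n hn => (An_div_self_eq u hn).symm) ?_
  convert (tendsto_qq_pow_sub u 1).add
    (((tendsto_one_sub_div_nat 1).mul tendsto_const_nhds).mul (tendsto_qq_pow_sub u 2)) using 2
  ring

lemma tendsto_c11_div_sq :
    Tendsto (fun n : ℕ => c11 u n / n ^ 2) atTop
      (𝓝 ((2 + 4 * ‖u‖ ^ 2 + ‖u‖ ^ 4) * Real.exp (‖u‖ ^ 2))) := by
  refine Tendsto.congr' ((eventually_ne_atTop 0).mono fun n hn => (c11_div_sq_eq u hn).symm) ?_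
  have h1 := tendsto_one_sub_div_nat 1
  have h2 := tendsto_one_sub_div_nat 2
  have h3 := tendsto_one_sub_div_nat 3
  convert ((tendsto_const_nhds.mul h1).mul (tendsto_qq_pow_sub u 2)).add
    ((((tendsto_const_nhds.mul h1).mul h2).mul tendsto_const_nhds).mul (tendsto_qq_pow_sub u 3))
    |>.add ((((h1.mul h2).mul h3).mul tendsto_const_nhds).mul (tendsto_qq_pow_sub u 4)) using 2
  ring

lemma tendsto_norm_b1_sq_div_cube :
    Tendsto (fun n : ℕ => ‖b1 u n‖ ^ 2 / n ^ 3) atTop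
      (𝓝 (‖u‖ ^ 2 * ((2 + ‖u‖ ^ 2) * Real.exp (‖u‖ ^ 2)) ^ 2)) := by
  refine Tendsto.congr' ((eventually_ne_atTop 0).mono fun n hn =>
    (norm_b1_sq_div_eq u hn).symm) ?_
  have h1 := tendsto_one_sub_div_nat 1
  have h2 := tendsto_one_sub_div_nat 2
  convert tendsto_const_nhds.mul ((((tendsto_const_nhds.mul h1).mul (tendsto_qq_pow_sub u 2)).add
    (((h1.mul h2).mul tendsto_const_nhds).mul (tendsto_qq_pow_sub u 3))).pow 2) using 2
  ring

lemma tendsto_norm_b2_sq_div_self :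
    Tendsto (fun n : ℕ => ‖b2 u n‖ ^ 2 / n) atTop (𝓝 (‖u‖ ^ 2 * Real.exp (‖u‖ ^ 2) ^ 2)) := by
  refine Tendsto.congr' ((eventually_ne_atTop 0).mono fun n hn => ?_)
    (tendsto_const_nhds.mul ((tendsto_qq_pow_sub u 1).pow 2))
  simp only [norm_b2_sq]
  field_simp

lemma tendsto_c22 : Tendsto (c22 u) atTop (𝓝 (Real.exp (‖u‖ ^ 2) - 1)) := by
  show Tendsto (fun n => qq u n ^ n - 1) _ _
  simpa only [Nat.sub_zero] using (tendsto_qq_pow_sub u 0).sub_const 1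

end

/-- Rescaling limits of the (1,1) and (2,2) entries of the conditional covariance matrix
`Λ_n = C_n − A_n⁻¹ B_n* B_n` at `u/√n`. -/
theorem Lambda_entries_rescaled_limit (u : ℂ) :
    Tendsto (fun n : ℕ => ((n : ℝ) ^ 2)⁻¹ * (c11 u n - ‖b1 u n‖ ^ 2 / An u n))
      atTop (nhds ((2 + 2 * ‖u‖ ^ 2 + ‖u‖ ^ 4) * Real.exp (‖u‖ ^ 2) / (1 + ‖u‖ ^ 2))) ∧
    Tendsto (fun n : ℕ => c22 u n - ‖b2 u n‖ ^ 2 / An u n)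
      atTop (nhds ((Real.exp (‖u‖ ^ 2) - 1 - ‖u‖ ^ 2) / (1 + ‖u‖ ^ 2))) := by
  have hA : (1 + ‖u‖ ^ 2) * Real.exp (‖u‖ ^ 2) ≠ 0 := by positivity
  constructor
  · refine (tendsto_c11_div_sq u).sub
      ((tendsto_norm_b1_sq_div_cube u).div (tendsto_An_div_self u) hA)
      |>.congr' ((eventually_ne_atTop 0).mono fun n hn => ?_) |>.trans_eq ?_
    · simp only [Pi.div_apply]
      field_simp
    · congr 1
      field_simp
      ring
  · refine (tendsto_c22 u).sub ((tendsto_norm_b2_sq_div_self u).div (tendsto_An_div_self u) hA)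
      |>.congr' ((eventually_ne_atTop 0).mono fun n hn => ?_) |>.trans_eq ?_
    · simp only [Pi.div_apply]
      field_simp
    · congr 1
      field_simp
      ring
end
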